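/- Let G = (Σ, A) be a finite directed graph whose vertices Σ are letters, with a ≠ b for every edge (a,b) ∈ A, and let m = 2|A|+1. Let S be the string over Σ obtained by concatenating, over all edges (a,b) ∈ A (in any fixed order), the string (aabab)^m. Then for every linear order ≤ on Σ, the number of order-4 bd-anchors of S (computed with the lexicographic order induced by ≤) satisfies |A_4(S)| = 2·|A|·m + d_≤·m + ε for some integer ε with −|A| ≤ ε ≤ |A|, where d_≤ = |{(a,b) ∈ A : a < b}|. -/
import Mathlib


open scoped Classical

variable {α : Type*} [LinearOrder α]

/-- The rotation of `W` starting at the 1-based position `j`. -/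
def rot (W : List α) (j : ℕ) : List α := W.drop (j - 1) ++ W.take (j - 1)

/-- The fragment `T[i..i+ℓ-1]` (1-based position `i`, length `ℓ`). -/
def frag (T : List α) (i ℓ : ℕ) : List α := (T.drop (i - 1)).take ℓ

/-- The `m`-fold concatenation `U^m`. -/
def listPow (U : List α) (m : ℕ) : List α := (List.replicate m U).flatten

/-- A nonempty string is primitive if it is not a power `U^m` with `m ≥ 2`. -/
def Primitive (X : List α) : Prop :=
  X ≠ [] ∧ ∀ (U : List α) (m : ℕ), 2 ≤ m → X ≠ listPow U m

/-- `j ∈ [1,|X|]` is a position at which a lexicographically minimal rotation of `X` starts. -/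
def IsMinRotPos (X : List α) (j : ℕ) : Prop :=
  j ∈ Finset.Icc 1 X.length ∧ ∀ k ∈ Finset.Icc 1 X.length, rot X j ≤ rot X k

/-- `j` is the bd-anchor of `X`: the smallest position of a lexicographically minimal rotation. -/
def IsBdAnchor (X : List α) (j : ℕ) : Prop :=
  IsMinRotPos X j ∧ ∀ k, IsMinRotPos X k → j ≤ k

/-- The set `A_ℓ(T)` of order-`ℓ` bd-anchors of `T` (1-based absolute positions). -/
def bdAnchors (ℓ : ℕ) (T : List α) : Set ℕ :=
  { p | ∃ i ∈ Finset.Icc 1 (T.length - ℓ + 1), ∃ j, IsBdAnchor (frag T i ℓ) j ∧ p = i - 1 + j }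



/-! ### Basic anchor lemmas -/

theorem isBdAnchor_unique {X : List α} {j j' : ℕ} (h : IsBdAnchor X j) (h' : IsBdAnchor X j') :
    j = j' :=
  le_antisymm (h.2 j' h'.1) (h'.2 j h.1)

theorem exists_isBdAnchor (X : List α) (hX : X ≠ []) : ∃ j, IsBdAnchor X j := by
  classical
  have hlen : 1 ≤ X.length := List.length_pos_iff.mpr hX
  have hne : (Finset.Icc 1 X.length).Nonempty := ⟨1, by simp [hlen]⟩
  obtain ⟨j0, hj0, hj0min⟩ := Finset.exists_min_image (Finset.Icc 1 X.length) (rot X) hne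
  set T : Finset ℕ := (Finset.Icc 1 X.length).filter (fun j => IsMinRotPos X j) with hT
  have hTne : T.Nonempty := by
    refine ⟨j0, Finset.mem_filter.mpr ⟨hj0, hj0, fun k hk => hj0min k hk⟩⟩
  refine ⟨T.min' hTne, ?_, ?_⟩
  · exact (Finset.mem_filter.mp (T.min'_mem hTne)).2
  · intro k hk
    exact T.min'_le k (Finset.mem_filter.mpr ⟨hk.1, hk⟩)

theorem isBdAnchor_intro4 (x1 x2 x3 x4 : α) (j : ℕ) (h1 : 1 ≤ j) (h2 : j ≤ 4)
    (hmin : ∀ k, 1 ≤ k → k ≤ 4 → rot [x1,x2,x3,x4] j ≤ rot [x1,x2,x3,x4] k)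
    (hstrict : ∀ k, 1 ≤ k → k < j → rot [x1,x2,x3,x4] j < rot [x1,x2,x3,x4] k) :
    IsBdAnchor [x1,x2,x3,x4] j := by
  have hmem : j ∈ Finset.Icc 1 ([x1,x2,x3,x4] : List α).length := by
    simp only [List.length]; exact Finset.mem_Icc.mpr ⟨h1, h2⟩
  refine ⟨⟨hmem, ?_⟩, ?_⟩
  · intro k hk
    rw [Finset.mem_Icc] at hk
    exact hmin k hk.1 hk.2
  · intro k hk
    by_contra hlt
    push_neg at hlt
    have hk' := Finset.mem_Icc.mp hk.1
    have h3 := hk.2 j hmem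
    have h4 := hstrict k hk'.1 hlt
    exact absurd h3 (not_le.mpr h4)

example (a b : α) (h : a < b) : IsBdAnchor [a,a,b,a] 4 := by
  apply isBdAnchor_intro4 _ _ _ _ 4 (by norm_num) (by norm_num)
  · intro k h1 h4
    interval_cases k
    · exact le_of_lt (List.Lex.cons (List.Lex.cons (List.Lex.rel h)))
    · exact le_of_lt (List.Lex.cons (List.Lex.rel h))
    · exact le_of_lt (List.Lex.rel h)
    · exact le_refl _
  · intro k h1 hk
    interval_cases k
    · exact List.Lex.cons (List.Lex.cons (List.Lex.rel h))
    · exact List.Lex.cons (List.Lex.rel h)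
    · exact List.Lex.rel h
/-! ### Anchor certificates for 4-letter windows -/

section Certificates

variable {a b c : α}

-- in-block, a < b
theorem bdP1 (h : a < b) : IsBdAnchor [a,a,b,a] 4 := by
  apply isBdAnchor_intro4 _ _ _ _ 4 (by norm_num) (by norm_num)
  · intro k h1 h4; interval_cases k
    · exact le_of_lt (List.Lex.cons (List.Lex.cons (List.Lex.rel h)))
    · exact le_of_lt (List.Lex.cons (List.Lex.rel h))
    · exact le_of_lt (List.Lex.rel h)
    · exact le_refl _
  · intro k h1 hk; interval_cases k
    · exact List.Lex.cons (List.Lex.cons (List.Lex.rel h))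
    · exact List.Lex.cons (List.Lex.rel h)
    · exact List.Lex.rel h

theorem bdP2 (h : a < b) : IsBdAnchor [a,b,a,b] 1 := by
  apply isBdAnchor_intro4 _ _ _ _ 1 (by norm_num) (by norm_num)
  · intro k h1 h4; interval_cases k
    · exact le_refl _
    · exact le_of_lt (List.Lex.rel h)
    · exact le_refl _
    · exact le_of_lt (List.Lex.rel h)
  · intro k h1 hk; omega

theorem bdP3 (h : a < b) : IsBdAnchor [b,a,b,a] 2 := by
  apply isBdAnchor_intro4 _ _ _ _ 2 (by norm_num) (by norm_num)
  · intro k h1 h4; interval_cases k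
    · exact le_of_lt (List.Lex.rel h)
    · exact le_refl _
    · exact le_of_lt (List.Lex.rel h)
    · exact le_refl _
  · intro k h1 hk; interval_cases k
    · exact List.Lex.rel h

theorem bdP4 (h : a < b) : IsBdAnchor [a,b,a,a] 3 := by
  apply isBdAnchor_intro4 _ _ _ _ 3 (by norm_num) (by norm_num)
  · intro k h1 h4; interval_cases k
    · exact le_of_lt (List.Lex.cons (List.Lex.rel h))
    · exact le_of_lt (List.Lex.rel h)
    · exact le_refl _
    · exact le_of_lt (List.Lex.cons (List.Lex.cons (List.Lex.rel h)))
  · intro k h1 hk; interval_cases k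
    · exact List.Lex.cons (List.Lex.rel h)
    · exact List.Lex.rel h

theorem bdP5 (h : a < b) : IsBdAnchor [b,a,a,b] 2 := by
  apply isBdAnchor_intro4 _ _ _ _ 2 (by norm_num) (by norm_num)
  · intro k h1 h4; interval_cases k
    · exact le_of_lt (List.Lex.rel h)
    · exact le_refl _
    · exact le_of_lt (List.Lex.cons (List.Lex.rel h))
    · exact le_of_lt (List.Lex.rel h)
  · intro k h1 hk; interval_cases k
    · exact List.Lex.rel h

-- in-block, b < a
theorem bdQ1 (h : b < a) : IsBdAnchor [a,a,b,a] 3 := by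
  apply isBdAnchor_intro4 _ _ _ _ 3 (by norm_num) (by norm_num)
  · intro k h1 h4; interval_cases k
    · exact le_of_lt (List.Lex.rel h)
    · exact le_of_lt (List.Lex.rel h)
    · exact le_refl _
    · exact le_of_lt (List.Lex.rel h)
  · intro k h1 hk; interval_cases k
    · exact List.Lex.rel h
    · exact List.Lex.rel h

theorem bdQ2 (h : b < a) : IsBdAnchor [a,b,a,b] 2 := by
  apply isBdAnchor_intro4 _ _ _ _ 2 (by norm_num) (by norm_num)
  · intro k h1 h4; interval_cases k
    · exact le_of_lt (List.Lex.rel h)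
    · exact le_refl _
    · exact le_of_lt (List.Lex.rel h)
    · exact le_refl _
  · intro k h1 hk; interval_cases k
    · exact List.Lex.rel h

theorem bdQ3 (h : b < a) : IsBdAnchor [b,a,b,a] 1 := by
  apply isBdAnchor_intro4 _ _ _ _ 1 (by norm_num) (by norm_num)
  · intro k h1 h4; interval_cases k
    · exact le_refl _
    · exact le_of_lt (List.Lex.rel h)
    · exact le_refl _
    · exact le_of_lt (List.Lex.rel h)
  · intro k h1 hk; omega

theorem bdQ4 (h : b < a) : IsBdAnchor [a,b,a,a] 2 := by
  apply isBdAnchor_intro4 _ _ _ _ 2 (by norm_num) (by norm_num)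
  · intro k h1 h4; interval_cases k
    · exact le_of_lt (List.Lex.rel h)
    · exact le_refl _
    · exact le_of_lt (List.Lex.rel h)
    · exact le_of_lt (List.Lex.rel h)
  · intro k h1 hk; interval_cases k
    · exact List.Lex.rel h

theorem bdQ5 (h : b < a) : IsBdAnchor [b,a,a,b] 4 := by
  apply isBdAnchor_intro4 _ _ _ _ 4 (by norm_num) (by norm_num)
  · intro k h1 h4; interval_cases k
    · exact le_of_lt (List.Lex.cons (List.Lex.rel h))
    · exact le_of_lt (List.Lex.rel h)
    · exact le_of_lt (List.Lex.rel h)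
    · exact le_refl _
  · intro k h1 hk; interval_cases k
    · exact List.Lex.cons (List.Lex.rel h)
    · exact List.Lex.rel h
    · exact List.Lex.rel h

-- boundary window w1 = [b,a,b,c], w2 = [a,b,c,c]
theorem bdL1 (h : a < b) (hac : a ≤ c) : IsBdAnchor [b,a,b,c] 2 := by
  apply isBdAnchor_intro4 _ _ _ _ 2 (by norm_num) (by norm_num)
  · intro k h1 h4; interval_cases k
    · exact le_of_lt (List.Lex.rel h)
    · exact le_refl _
    · exact le_of_lt (List.Lex.rel h)
    · rcases lt_or_eq_of_le hac with h'|h'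
      · exact le_of_lt (List.Lex.rel h')
      · subst h'; exact le_refl _
  · intro k h1 hk; interval_cases k
    · exact List.Lex.rel h

theorem bdL24w1 (hca : c < a) (hcb : c < b) : IsBdAnchor [b,a,b,c] 4 := by
  apply isBdAnchor_intro4 _ _ _ _ 4 (by norm_num) (by norm_num)
  · intro k h1 h4; interval_cases k
    · exact le_of_lt (List.Lex.rel hcb)
    · exact le_of_lt (List.Lex.rel hca)
    · exact le_of_lt (List.Lex.rel hcb)
    · exact le_refl _
  · intro k h1 hk; interval_cases k
    · exact List.Lex.rel hcb
    · exact List.Lex.rel hca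
    · exact List.Lex.rel hcb

theorem bdL24w2 (hca : c < a) (hcb : c < b) : IsBdAnchor [a,b,c,c] 3 := by
  apply isBdAnchor_intro4 _ _ _ _ 3 (by norm_num) (by norm_num)
  · intro k h1 h4; interval_cases k
    · exact le_of_lt (List.Lex.rel hca)
    · exact le_of_lt (List.Lex.rel hcb)
    · exact le_refl _
    · exact le_of_lt (List.Lex.cons (List.Lex.rel hca))
  · intro k h1 hk; interval_cases k
    · exact List.Lex.rel hca
    · exact List.Lex.rel hcb

theorem bdL3 (h : b < a) (hac : a ≤ c) : IsBdAnchor [b,a,b,c] 1 := by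
  apply isBdAnchor_intro4 _ _ _ _ 1 (by norm_num) (by norm_num)
  · intro k h1 h4; interval_cases k
    · exact le_refl _
    · exact le_of_lt (List.Lex.rel h)
    · rcases lt_or_eq_of_le hac with h'|h'
      · exact le_of_lt (List.Lex.cons (List.Lex.rel h'))
      · subst h'; exact le_refl _
    · exact le_of_lt (List.Lex.rel (h.trans_le hac))
  · intro k h1 hk; omega

theorem bdL5w1 (h : b < a) (hbc : b ≤ c) (hca : c < a) : IsBdAnchor [b,a,b,c] 3 := by
  apply isBdAnchor_intro4 _ _ _ _ 3 (by norm_num) (by norm_num)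
  · intro k h1 h4; interval_cases k
    · exact le_of_lt (List.Lex.cons (List.Lex.rel hca))
    · exact le_of_lt (List.Lex.rel h)
    · exact le_refl _
    · rcases lt_or_eq_of_le hbc with h'|h'
      · exact le_of_lt (List.Lex.rel h')
      · subst h'; exact le_of_lt (List.Lex.cons (List.Lex.cons (List.Lex.rel h)))
  · intro k h1 hk; interval_cases k
    · exact List.Lex.cons (List.Lex.rel hca)
    · exact List.Lex.rel h

theorem bdL5w2 (h : b < a) (hbc : b ≤ c) (hca : c < a) : IsBdAnchor [a,b,c,c] 2 := by
  apply isBdAnchor_intro4 _ _ _ _ 2 (by norm_num) (by norm_num)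
  · intro k h1 h4; interval_cases k
    · exact le_of_lt (List.Lex.rel h)
    · exact le_refl _
    · rcases lt_or_eq_of_le hbc with h'|h'
      · exact le_of_lt (List.Lex.rel h')
      · subst h'; exact le_of_lt (List.Lex.cons (List.Lex.cons (List.Lex.rel h)))
    · rcases lt_or_eq_of_le hbc with h'|h'
      · exact le_of_lt (List.Lex.rel h')
      · subst h'; exact le_of_lt (List.Lex.cons (List.Lex.rel h))
  · intro k h1 hk; interval_cases k
    · exact List.Lex.rel h

end Certificates
/-! ### String structure -/

set_option linter.unusedSectionVars false

theorem listPow_length (U : List α) (m : ℕ) : (listPow U m).length = m * U.length := by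
  induction m with
  | zero => simp [listPow]
  | succ n ih =>
      rw [show n + 1 = n + 1 from rfl, listPow]
      rw [List.replicate_succ, List.flatten_cons]
      rw [List.length_append]
      rw [show (List.replicate n U).flatten = listPow U n from rfl, ih]
      ring

theorem listPow_add (U : List α) (x y : ℕ) :
    listPow U (x + y) = listPow U x ++ listPow U y := by
  rw [listPow, listPow, listPow, List.replicate_add, List.flatten_append]

theorem listPow_one (U : List α) : listPow U 1 = U := by
  rw [listPow, List.replicate_one, List.flatten_cons, List.flatten_nil, List.append_nil]

theorem listPow_two (U : List α) : listPow U 2 = U ++ U := by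
  rw [show (2:ℕ) = 1 + 1 from rfl, listPow_add, listPow_one]

theorem frag_core (P V R : List α) (i s0 : ℕ) (h : i = P.length + s0 + 1)
    (hs : s0 + 4 ≤ V.length) : frag (P ++ V ++ R) i 4 = (V.drop s0).take 4 := by
  subst h
  simp only [frag, Nat.add_sub_cancel]
  rw [List.append_assoc, List.drop_append]
  rw [List.drop_of_length_le (by omega : P.length ≤ P.length + s0)]
  simp only [List.nil_append]
  rw [show P.length + s0 - P.length = s0 by omega]
  rw [List.drop_append]
  rw [List.take_append]
  rw [show 4 - (V.drop s0).length = 0 by simp [List.length_drop]; omega]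
  rw [List.take_zero, List.append_nil]
/-! ### Blocks and interior anchor sets -/

section Blocks

variable {β : Type*} [LinearOrder β]

def pat (e : β × β) : List β := [e.1, e.1, e.2, e.1, e.2]

def blk (m : ℕ) (e : β × β) : List β := listPow (pat e) m

def catS (m : ℕ) (A : List (β × β)) : List β := (A.map (blk m)).flatten

theorem blk_length (m : ℕ) (e : β × β) : (blk m e).length = 5 * m := by
  rw [blk, listPow_length]; simp [pat]; ring

theorem catS_nil (m : ℕ) : catS m ([] : List (β × β)) = [] := rfl

theorem catS_cons (m : ℕ) (e : β × β) (A : List (β × β)) :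
    catS m (e :: A) = blk m e ++ catS m A := by
  simp [catS]

theorem catS_append (m : ℕ) (A B : List (β × β)) :
    catS m (A ++ B) = catS m A ++ catS m B := by
  simp [catS]

theorem catS_length (m : ℕ) (A : List (β × β)) : (catS m A).length = A.length * (5 * m) := by
  induction A with
  | nil => simp [catS]
  | cons e rest ih => rw [catS_cons, List.length_append, blk_length, ih]; simp; ring

theorem list_split (A : List (β × β)) (t : ℕ) (ht : t < A.length) :
    ∃ (A₁ : List (β × β)) (e : β × β) (A₂ : List (β × β)), A = A₁ ++ e :: A₂ ∧ A₁.length = t := by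
  induction A generalizing t with
  | nil => simp at ht
  | cons x xs ih =>
      cases t with
      | zero => exact ⟨[], x, xs, rfl, rfl⟩
      | succ n =>
          obtain ⟨A₁, e, A₂, h1, h2⟩ := ih n (by simpa using ht)
          exact ⟨x :: A₁, e, A₂, by rw [h1]; rfl, by simp [h2]⟩

def IBlk (m base : ℕ) (e : β × β) : Finset ℕ :=
  if e.1 < e.2 then
    ((Finset.range m).image fun q => base + 5*q + 2) ∪
    ((Finset.range m).image fun q => base + 5*q + 4) ∪
    ((Finset.range (m-1)).image fun q => base + 5*q + 6)
  else
    ((Finset.range m).image fun q => base + 5*q + 3) ∪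
    ((Finset.range (m-1)).image fun q => base + 5*q + 5)

theorem mem_IBlk_bounds {m base : ℕ} {e : β × β} {x : ℕ} (hx : x ∈ IBlk m base e) :
    base + 2 ≤ x ∧ x ≤ base + 5*m - 1 := by
  rw [IBlk] at hx
  split at hx <;> simp only [Finset.mem_union, Finset.mem_image, Finset.mem_range] at hx <;>
    rcases hx with (⟨q,hq,rfl⟩|⟨q,hq,rfl⟩)|⟨q,hq,rfl⟩ <;> omega

theorem mem_IBlk_bounds' {m base : ℕ} {e : β × β} {x : ℕ} (hx : x ∈ IBlk m base e) :
    base + 2 ≤ x ∧ x ≤ base + 5*m - 1 := mem_IBlk_bounds hx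

theorem card_IBlk (m base : ℕ) (e : β × β) (hm : 1 ≤ m) :
    (IBlk m base e).card = (if e.1 < e.2 then 3*m - 1 else 2*m - 1) := by
  rw [IBlk]
  split
  · rw [Finset.card_union_of_disjoint, Finset.card_union_of_disjoint]
    · rw [Finset.card_image_of_injOn (fun x _ y _ h => by omega),
        Finset.card_image_of_injOn (fun x _ y _ h => by omega),
        Finset.card_image_of_injOn (fun x _ y _ h => by omega)]
      simp only [Finset.card_range]; omega
    · rw [Finset.disjoint_left]
      intro x hx hy
      simp only [Finset.mem_image, Finset.mem_range] at hx hy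
      obtain ⟨q,hq,rfl⟩ := hx; obtain ⟨q',hq',h⟩ := hy; omega
    · rw [Finset.disjoint_left]
      intro x hx hy
      simp only [Finset.mem_union, Finset.mem_image, Finset.mem_range] at hx hy
      obtain ⟨q',hq',h⟩ := hy
      rcases hx with ⟨q,hq,rfl⟩|⟨q,hq,rfl⟩ <;> omega
  · rw [Finset.card_union_of_disjoint]
    · rw [Finset.card_image_of_injOn (fun x _ y _ h => by omega),
        Finset.card_image_of_injOn (fun x _ y _ h => by omega)]
      simp only [Finset.card_range]; omega
    · rw [Finset.disjoint_left]
      intro x hx hy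
      simp only [Finset.mem_image, Finset.mem_range] at hx hy
      obtain ⟨q,hq,rfl⟩ := hx; obtain ⟨q',hq',h⟩ := hy; omega

def interiorF (m : ℕ) : List (β × β) → ℕ → Finset ℕ
  | [], _ => ∅
  | e :: rest, base => IBlk m base e ∪ interiorF m rest (base + 5*m)

theorem interiorF_bounds {m : ℕ} {A : List (β × β)} {base x : ℕ}
    (hx : x ∈ interiorF m A base) : base + 2 ≤ x ∧ x ≤ base + A.length * (5*m) - 1 := by
  induction A generalizing base with
  | nil => simp [interiorF] at hx
  | cons e rest ih =>
      rw [show interiorF m (e :: rest) base = IBlk m base e ∪ interiorF m rest (base + 5*m) from rfl, Finset.mem_union] at hx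
      rcases hx with hx | hx
      · have := mem_IBlk_bounds hx
        simp only [List.length_cons]
        constructor
        · omega
        · have h5 : base + 5*m - 1 ≤ base + (rest.length + 1) * (5*m) - 1 := by
            have : 5*m ≤ (rest.length + 1) * (5*m) := Nat.le_mul_of_pos_left _ (by omega)
            omega
          omega
      · have := ih hx
        simp only [List.length_cons]
        constructor
        · omega
        · have : base + 5*m + rest.length * (5*m) = base + (rest.length + 1) * (5*m) := by ring
          omega

theorem card_interiorF (m : ℕ) (hm : 1 ≤ m) (A : List (β × β)) (base : ℕ) :
    (interiorF m A base).card + A.length =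
      (2 * A.length + (A.filter fun e => e.1 < e.2).length) * m := by
  induction A generalizing base with
  | nil => simp [interiorF]
  | cons e rest ih =>
      rw [show interiorF m (e :: rest) base = IBlk m base e ∪ interiorF m rest (base + 5*m) from rfl, Finset.card_union_of_disjoint, card_IBlk _ _ _ hm]
      · have h2 := ih (base + 5*m)
        by_cases hlt : e.1 < e.2
        · simp only [List.filter_cons, decide_eq_true_eq, if_pos hlt, List.length_cons,
            if_pos hlt] at h2 ⊢
          have e1 : 2 * (rest.length + 1) + ((List.filter (fun e => decide (e.1 < e.2)) rest).length + 1)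
              = (2 * rest.length + (List.filter (fun e => decide (e.1 < e.2)) rest).length) + 3 := by ring
          rw [e1, Nat.add_mul]
          omega
        · simp only [List.filter_cons, decide_eq_true_eq, if_neg hlt, List.length_cons] at h2 ⊢
          have e1 : 2 * (rest.length + 1) + (List.filter (fun e => decide (e.1 < e.2)) rest).length
              = (2 * rest.length + (List.filter (fun e => decide (e.1 < e.2)) rest).length) + 2 := by ring
          rw [e1, Nat.add_mul]
          omega
      · rw [Finset.disjoint_left]
        intro x hx hy
        have h1 := mem_IBlk_bounds hx
        have h2 := interiorF_bounds hy
        omega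

theorem mem_interiorF_of (m : ℕ) {A A₁ A₂ : List (β × β)} {e : β × β} {x : ℕ}
    (hA : A = A₁ ++ e :: A₂) (base : ℕ) (hx : x ∈ IBlk m (base + A₁.length * (5*m)) e) :
    x ∈ interiorF m A base := by
  subst hA
  induction A₁ generalizing base with
  | nil =>
      show x ∈ IBlk m base e ∪ interiorF m A₂ (base + 5*m)
      simp only [List.length_nil, Nat.zero_mul, Nat.add_zero] at hx
      exact Finset.mem_union_left _ hx
  | cons f rest ih =>
      rw [List.cons_append]
      show x ∈ IBlk m base f ∪ interiorF m (rest ++ e :: A₂) (base + 5*m)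
      rw [Finset.mem_union]
      refine Or.inr (ih (base + 5*m) ?_)
      have : base + 5*m + rest.length * (5*m) = base + (rest.length + 1) * (5*m) := by ring
      rw [this]
      simpa using hx

theorem mem_interiorF_elim (m : ℕ) {A : List (β × β)} {base x : ℕ}
    (hx : x ∈ interiorF m A base) :
    ∃ (A₁ : List (β × β)) (e : β × β) (A₂ : List (β × β)), A = A₁ ++ e :: A₂ ∧ x ∈ IBlk m (base + A₁.length * (5*m)) e := by
  induction A generalizing base with
  | nil => simp [interiorF] at hx
  | cons e rest ih =>
      rw [show interiorF m (e :: rest) base = IBlk m base e ∪ interiorF m rest (base + 5*m) from rfl, Finset.mem_union] at hx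
      rcases hx with hx | hx
      · exact ⟨[], e, rest, rfl, by simpa using hx⟩
      · obtain ⟨A₁, f, A₂, h1, h2⟩ := ih hx
        refine ⟨e :: A₁, f, A₂, by rw [h1]; rfl, ?_⟩
        have : base + 5*m + A₁.length * (5*m) = base + (A₁.length + 1) * (5*m) := by ring
        rw [this] at h2
        simpa using h2

end Blocks
/-! ### Window extraction -/

section Windows

variable {β : Type*} [LinearOrder β]

theorem pat_length (e : β × β) : (pat e).length = 5 := rfl

theorem frag_inblock (m : ℕ) (A₁ A₂ : List (β × β)) (e : β × β) (q s0 i : ℕ)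
    (hq : q + 2 ≤ m) (hs : s0 ≤ 6)
    (hi : i = A₁.length * (5*m) + 5*q + s0 + 1) :
    frag (catS m (A₁ ++ e :: A₂)) i 4 = ((pat e ++ pat e).drop s0).take 4 := by
  obtain ⟨m2, rfl⟩ : ∃ m2, m = q + (2 + m2) := ⟨m - q - 2, by omega⟩
  have hS : catS (q + (2 + m2)) (A₁ ++ e :: A₂) =
      (catS (q + (2 + m2)) A₁ ++ listPow (pat e) q) ++ (pat e ++ pat e) ++
        (listPow (pat e) m2 ++ catS (q + (2 + m2)) A₂) := by
    rw [catS_append, catS_cons, blk, listPow_add, listPow_add, listPow_two]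
    simp [List.append_assoc]
  rw [hS]
  apply frag_core
  · rw [List.length_append, catS_length, listPow_length, pat_length, hi]
    ring
  · simp [pat]; omega

theorem frag_boundary (m : ℕ) (A₁ A₂ : List (β × β)) (e f : β × β) (s0 i : ℕ)
    (hm : 1 ≤ m) (hs : s0 ≤ 6)
    (hi : i = A₁.length * (5*m) + 5*(m-1) + s0 + 1) :
    frag (catS m (A₁ ++ e :: f :: A₂)) i 4 = ((pat e ++ pat f).drop s0).take 4 := by
  obtain ⟨m1, rfl⟩ : ∃ m1, m = m1 + 1 := ⟨m - 1, by omega⟩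
  have hS : catS (m1 + 1) (A₁ ++ e :: f :: A₂) =
      (catS (m1 + 1) A₁ ++ listPow (pat e) m1) ++ (pat e ++ pat f) ++
        (listPow (pat f) m1 ++ catS (m1 + 1) A₂) := by
    rw [catS_append, catS_cons, catS_cons, blk, blk]
    rw [show listPow (pat e) (m1 + 1) = listPow (pat e) m1 ++ pat e by
      rw [listPow_add, listPow_one]]
    rw [show listPow (pat f) (m1 + 1) = pat f ++ listPow (pat f) m1 by
      rw [show m1 + 1 = 1 + m1 by omega, listPow_add, listPow_one]]
    simp [List.append_assoc]
  rw [hS]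
  apply frag_core
  · rw [List.length_append, catS_length, listPow_length, pat_length, hi]
    simp; ring
  · simp [pat]; omega

end Windows
/-! ### Lower bound -/

section Main

variable {β : Type*} [LinearOrder β]

noncomputable def bdj (X : List β) : ℕ :=
  if h : ∃ j, IsBdAnchor X j then h.choose else 0

theorem bdj_eq {X : List β} {j : ℕ} (h : IsBdAnchor X j) : bdj X = j := by
  rw [bdj, dif_pos ⟨j, h⟩]
  exact isBdAnchor_unique (Exists.choose_spec (⟨j, h⟩ : ∃ j, IsBdAnchor X j)) h

noncomputable def anchorPos (T : List β) (i : ℕ) : ℕ := i - 1 + bdj (frag T i 4)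

noncomputable def EF (m : ℕ) (A : List (β × β)) : Finset ℕ :=
  (Finset.Icc 1 (A.length - 1)).biUnion
    (fun t => {anchorPos (catS m A) (5*m*t - 1), anchorPos (catS m A) (5*m*t)})

theorem card_EF (m : ℕ) (A : List (β × β)) : (EF m A).card ≤ 2 * (A.length - 1) := by
  calc (EF m A).card ≤ ∑ t ∈ Finset.Icc 1 (A.length - 1), ({anchorPos (catS m A) (5*m*t - 1), anchorPos (catS m A) (5*m*t)} : Finset ℕ).card :=
        Finset.card_biUnion_le
    _ ≤ ∑ _t ∈ Finset.Icc 1 (A.length - 1), 2 := by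
        refine Finset.sum_le_sum fun t _ => ?_
        exact (Finset.card_insert_le _ _).trans (by simp)
    _ ≤ 2 * (A.length - 1) := by simp [Nat.Icc_eq_range', mul_comm]

theorem mem_bdAnchors_of_window (m : ℕ) (A A₁ A₂ : List (β × β)) (e : β × β)
    (hA : A = A₁ ++ e :: A₂) (q s0 j x : ℕ) (hq : q + 2 ≤ m) (hs0 : s0 ≤ 6)
    (hj : IsBdAnchor (((pat e ++ pat e).drop s0).take 4) j)
    (hx : x = A₁.length * (5*m) + 5*q + s0 + j) :
    x ∈ bdAnchors 4 (catS m A) := by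
  refine ⟨A₁.length * (5*m) + 5*q + s0 + 1, ?_, j, ?_, by omega⟩
  · rw [Finset.mem_Icc, catS_length, hA]
    simp only [List.length_append, List.length_cons]
    have h5 : 5*m ≤ 5*m := le_refl _
    have : (A₁.length + (A₂.length + 1)) * (5*m) =
        A₁.length * (5*m) + A₂.length * (5*m) + 5*m := by ring
    omega
  · rw [hA, frag_inblock m A₁ A₂ e q s0 _ hq hs0 rfl]
    exact hj

theorem interior_subset_bdAnchors (m : ℕ) (hm : 3 ≤ m) (A : List (β × β))
    (hne : ∀ e ∈ A, e.1 ≠ e.2) :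
    ↑(interiorF m A 0) ⊆ bdAnchors 4 (catS m A) := by
  intro x hx
  obtain ⟨A₁, e, A₂, hA, hxI⟩ := mem_interiorF_elim m hx
  rw [Nat.zero_add] at hxI
  rw [IBlk] at hxI
  by_cases hlt : e.1 < e.2
  · rw [if_pos hlt] at hxI
    simp only [Finset.mem_union, Finset.mem_image, Finset.mem_range] at hxI
    rcases hxI with (⟨q, hq, rfl⟩ | ⟨q, hq, rfl⟩) | ⟨q, hq, rfl⟩
    · -- x = base + 5q + 2, window [a,b,a,b], j = 1
      rcases le_or_gt (q + 2) m with h | h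
      · exact mem_bdAnchors_of_window m A A₁ A₂ e hA q 1 1 _ h (by omega)
          (bdP2 hlt) (by omega)
      · exact mem_bdAnchors_of_window m A A₁ A₂ e hA (m-2) 6 1 _ (by omega) (by omega)
          (bdP2 hlt) (by omega)
    · -- x = base + 5q + 4, window [a,a,b,a], j = 4
      rcases le_or_gt (q + 2) m with h | h
      · exact mem_bdAnchors_of_window m A A₁ A₂ e hA q 0 4 _ h (by omega)
          (bdP1 hlt) (by omega)
      · exact mem_bdAnchors_of_window m A A₁ A₂ e hA (m-2) 5 4 _ (by omega) (by omega)
          (bdP1 hlt) (by omega)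
    · -- x = base + 5q + 6, q < m-1, window [a,b,a,a] at s0=3, j = 3
      exact mem_bdAnchors_of_window m A A₁ A₂ e hA q 3 3 _ (by omega) (by omega)
        (bdP4 hlt) (by omega)
  · rw [if_neg hlt] at hxI
    have hlt' : e.2 < e.1 := by
      rcases lt_trichotomy e.1 e.2 with h | h | h
      · exact absurd h hlt
      · exact absurd h (hne e (by simp [hA]))
      · exact h
    simp only [Finset.mem_union, Finset.mem_image, Finset.mem_range] at hxI
    rcases hxI with ⟨q, hq, rfl⟩ | ⟨q, hq, rfl⟩
    · -- x = base + 5q + 3, window [a,a,b,a], j = 3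
      rcases le_or_gt (q + 2) m with h | h
      · exact mem_bdAnchors_of_window m A A₁ A₂ e hA q 0 3 _ h (by omega)
          (bdQ1 hlt') (by omega)
      · exact mem_bdAnchors_of_window m A A₁ A₂ e hA (m-2) 5 3 _ (by omega) (by omega)
          (bdQ1 hlt') (by omega)
    · -- x = base + 5q + 5, q < m-1, window [a,b,a,a] at s0=3, j = 2
      exact mem_bdAnchors_of_window m A A₁ A₂ e hA q 3 2 _ (by omega) (by omega)
        (bdQ4 hlt') (by omega)

end Main
/-! ### Upper bound -/

section Upper

variable {β : Type*} [LinearOrder β]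

theorem bdAnchors_subset (m : ℕ) (hm : 3 ≤ m) (A : List (β × β))
    (hne : ∀ e ∈ A, e.1 ≠ e.2) :
    bdAnchors 4 (catS m A) ⊆ ↑(interiorF m A 0) ∪ ↑(EF m A) := by
  intro p hp
  obtain ⟨i, hi, j, hj, rfl⟩ := hp
  rw [Finset.mem_Icc, catS_length] at hi
  -- A is nonempty
  have hk1 : 1 ≤ A.length := by
    by_contra h
    have hA0 : A = [] := List.length_eq_zero_iff.mp (by omega)
    subst hA0
    have h9 := hj.1.1
    simp only [frag, catS, List.map_nil, List.flatten_nil, List.drop_nil, List.take_nil,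
      List.length_nil] at h9
    rw [Finset.mem_Icc] at h9
    omega
  have hpos : 0 < 5 * m := by omega
  have h1 := Nat.div_add_mod (i - 1) (5 * m)
  have h2 := Nat.mod_lt (i - 1) hpos
  set t := (i - 1) / (5 * m) with hts
  set r := (i - 1) % (5 * m) with hrs
  have hn4 : 4 ≤ A.length * (5 * m) := by
    have : 1 * (5 * m) ≤ A.length * (5 * m) := Nat.mul_le_mul_right _ hk1
    omega
  have hcomm : A.length * (5 * m) = 5 * m * A.length := by ring
  have ht : t < A.length := by
    rw [hts]
    exact Nat.div_lt_of_lt_mul (by omega)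
  rcases le_or_gt r (5 * m - 4) with hrle | hrgt
  · -- window inside block t
    obtain ⟨q, s0, hqs, hs06, hq2⟩ : ∃ q s0, r = 5 * q + s0 ∧ s0 ≤ 6 ∧ q + 2 ≤ m :=
      ⟨min (r / 5) (m - 2), r - 5 * min (r / 5) (m - 2), by omega, by omega, by omega⟩
    obtain ⟨A₁, e, A₂, hA, hlen⟩ := list_split A t ht
    have hBase : A₁.length * (5 * m) = 5 * m * t := by rw [hlen]; ring
    have hfrag : frag (catS m A) i 4 = ((pat e ++ pat e).drop s0).take 4 := by
      rw [hA]
      exact frag_inblock m A₁ A₂ e q s0 i hq2 hs06 (by omega)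
    rw [hfrag] at hj
    have hmemI : ∀ x, x ∈ IBlk m (0 + A₁.length * (5*m)) e → (x : ℕ) ∈
        (↑(interiorF m A 0) ∪ ↑(EF m A) : Set ℕ) :=
      fun x hx => Or.inl (Finset.mem_coe.mpr (mem_interiorF_of m hA 0 hx))
    by_cases hlt : e.1 < e.2
    · interval_cases s0
      · have hje : j = 4 := isBdAnchor_unique hj (bdP1 hlt)
        subst hje
        refine hmemI _ ?_
        rw [IBlk, if_pos hlt]
        simp only [Finset.mem_union, Finset.mem_image, Finset.mem_range]
        exact Or.inl (Or.inr ⟨q, by omega, by omega⟩)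
      · have hje : j = 1 := isBdAnchor_unique hj (bdP2 hlt)
        subst hje
        refine hmemI _ ?_
        rw [IBlk, if_pos hlt]
        simp only [Finset.mem_union, Finset.mem_image, Finset.mem_range]
        exact Or.inl (Or.inl ⟨q, by omega, by omega⟩)
      · have hje : j = 2 := isBdAnchor_unique hj (bdP3 hlt)
        subst hje
        refine hmemI _ ?_
        rw [IBlk, if_pos hlt]
        simp only [Finset.mem_union, Finset.mem_image, Finset.mem_range]
        exact Or.inl (Or.inr ⟨q, by omega, by omega⟩)
      · have hje : j = 3 := isBdAnchor_unique hj (bdP4 hlt)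
        subst hje
        refine hmemI _ ?_
        rw [IBlk, if_pos hlt]
        simp only [Finset.mem_union, Finset.mem_image, Finset.mem_range]
        exact Or.inr ⟨q, by omega, by omega⟩
      · have hje : j = 2 := isBdAnchor_unique hj (bdP5 hlt)
        subst hje
        refine hmemI _ ?_
        rw [IBlk, if_pos hlt]
        simp only [Finset.mem_union, Finset.mem_image, Finset.mem_range]
        exact Or.inr ⟨q, by omega, by omega⟩
      · have hje : j = 4 := isBdAnchor_unique hj (bdP1 hlt)
        subst hje
        refine hmemI _ ?_
        rw [IBlk, if_pos hlt]
        simp only [Finset.mem_union, Finset.mem_image, Finset.mem_range]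
        exact Or.inl (Or.inr ⟨q + 1, by omega, by omega⟩)
      · have hje : j = 1 := isBdAnchor_unique hj (bdP2 hlt)
        subst hje
        refine hmemI _ ?_
        rw [IBlk, if_pos hlt]
        simp only [Finset.mem_union, Finset.mem_image, Finset.mem_range]
        exact Or.inl (Or.inl ⟨q + 1, by omega, by omega⟩)
    · have hgt : e.2 < e.1 := (hne e (by simp [hA])).lt_or_gt.resolve_left hlt
      interval_cases s0
      · have hje : j = 3 := isBdAnchor_unique hj (bdQ1 hgt)
        subst hje
        refine hmemI _ ?_
        rw [IBlk, if_neg hlt]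
        simp only [Finset.mem_union, Finset.mem_image, Finset.mem_range]
        exact Or.inl ⟨q, by omega, by omega⟩
      · have hje : j = 2 := isBdAnchor_unique hj (bdQ2 hgt)
        subst hje
        refine hmemI _ ?_
        rw [IBlk, if_neg hlt]
        simp only [Finset.mem_union, Finset.mem_image, Finset.mem_range]
        exact Or.inl ⟨q, by omega, by omega⟩
      · have hje : j = 1 := isBdAnchor_unique hj (bdQ3 hgt)
        subst hje
        refine hmemI _ ?_
        rw [IBlk, if_neg hlt]
        simp only [Finset.mem_union, Finset.mem_image, Finset.mem_range]
        exact Or.inl ⟨q, by omega, by omega⟩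
      · have hje : j = 2 := isBdAnchor_unique hj (bdQ4 hgt)
        subst hje
        refine hmemI _ ?_
        rw [IBlk, if_neg hlt]
        simp only [Finset.mem_union, Finset.mem_image, Finset.mem_range]
        exact Or.inr ⟨q, by omega, by omega⟩
      · have hje : j = 4 := isBdAnchor_unique hj (bdQ5 hgt)
        subst hje
        refine hmemI _ ?_
        rw [IBlk, if_neg hlt]
        simp only [Finset.mem_union, Finset.mem_image, Finset.mem_range]
        exact Or.inl ⟨q + 1, by omega, by omega⟩
      · have hje : j = 3 := isBdAnchor_unique hj (bdQ1 hgt)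
        subst hje
        refine hmemI _ ?_
        rw [IBlk, if_neg hlt]
        simp only [Finset.mem_union, Finset.mem_image, Finset.mem_range]
        exact Or.inl ⟨q + 1, by omega, by omega⟩
      · have hje : j = 2 := isBdAnchor_unique hj (bdQ2 hgt)
        subst hje
        refine hmemI _ ?_
        rw [IBlk, if_neg hlt]
        simp only [Finset.mem_union, Finset.mem_image, Finset.mem_range]
        exact Or.inl ⟨q + 1, by omega, by omega⟩
  · -- window crosses the boundary between block t and block t+1
    have ht1 : t + 1 < A.length := by
      by_contra h
      have h' : A.length = t + 1 := by omega
      have : A.length * (5 * m) = 5 * m * t + 5 * m := by rw [h']; ring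
      omega
    obtain ⟨A₁, e, A₂', hA, hlen⟩ := list_split A t ht
    have hlen2 : 1 ≤ A₂'.length := by
      by_contra h
      have : A₂' = [] := List.length_eq_zero_iff.mp (by omega)
      subst this
      have : A.length = A₁.length + 1 := by rw [hA]; simp
      omega
    obtain ⟨f, A₂, rfl⟩ : ∃ g A₂, A₂' = g :: A₂ := by
      cases A₂' with
      | nil => simp at hlen2
      | cons g tl => exact ⟨g, tl, rfl⟩
    have hBase : A₁.length * (5 * m) = 5 * m * t := by rw [hlen]; ring
    have hmul : 5 * m * (t + 1) = 5 * m * t + 5 * m := by ring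
    have hEF : ∀ c : ℕ, c = 1 ∨ c = 2 →
        i - 1 + j = anchorPos (catS m A) (5 * m * t + 5 * m - 2 + c) →
        (i - 1 + j : ℕ) ∈ (↑(interiorF m A 0) ∪ ↑(EF m A) : Set ℕ) := by
      intro c hc hv
      refine Or.inr (Finset.mem_coe.mpr ?_)
      rw [EF]
      rw [Finset.mem_biUnion]
      refine ⟨t + 1, Finset.mem_Icc.mpr ⟨by omega, by omega⟩, ?_⟩
      simp only [Finset.mem_insert, Finset.mem_singleton]
      rcases hc with rfl | rfl
      · exact Or.inl (by rw [hv]; congr 1; omega)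
      · exact Or.inr (by rw [hv]; congr 1; omega)
    have hmemI : ∀ x, x ∈ IBlk m (0 + A₁.length * (5*m)) e → (x : ℕ) ∈
        (↑(interiorF m A 0) ∪ ↑(EF m A) : Set ℕ) :=
      fun x hx => Or.inl (Finset.mem_coe.mpr (mem_interiorF_of m hA 0 hx))
    have hrcases : r = 5*(m-1) + 2 ∨ r = 5*(m-1) + 3 ∨ r = 5*(m-1) + 4 := by omega
    rcases hrcases with hr | hr
    · -- w1 window [b,a,b,c]
      have hfrag : frag (catS m A) i 4 = ((pat e ++ pat f).drop 2).take 4 := by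
        rw [hA]
        exact frag_boundary m A₁ A₂ e f 2 i (by omega) (by omega) (by omega)
      rw [hfrag] at hj
      have hw2 : frag (catS m A) (i + 1) 4 = ((pat e ++ pat f).drop 3).take 4 := by
        rw [hA]
        exact frag_boundary m A₁ A₂ e f 3 (i+1) (by omega) (by omega) (by omega)
      rcases (hne e (by simp [hA])).lt_or_gt with hab | hba
      · rcases le_or_gt e.1 f.1 with hac | hca
        · have hje : j = 2 := isBdAnchor_unique hj (bdL1 hab hac)
          subst hje
          refine hmemI _ ?_
          rw [IBlk, if_pos hab]
          simp only [Finset.mem_union, Finset.mem_image, Finset.mem_range]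
          exact Or.inl (Or.inr ⟨m - 1, by omega, by omega⟩)
        · have hcb : f.1 < e.2 := hca.trans hab
          have hje : j = 4 := isBdAnchor_unique hj (bdL24w1 hca hcb)
          subst hje
          refine hEF 1 (Or.inl rfl) ?_
          rw [show 5 * m * t + 5 * m - 2 + 1 = i + 1 by omega, anchorPos, hw2,
            bdj_eq (show IsBdAnchor (((pat e ++ pat f).drop 3).take 4) 3 from bdL24w2 hca hcb)]
          omega
      · have hnlt : ¬ e.1 < e.2 := asymm hba
        rcases le_or_gt e.1 f.1 with hac | hca
        · have hje : j = 1 := isBdAnchor_unique hj (bdL3 hba hac)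
          subst hje
          refine hmemI _ ?_
          rw [IBlk, if_neg hnlt]
          simp only [Finset.mem_union, Finset.mem_image, Finset.mem_range]
          exact Or.inl ⟨m - 1, by omega, by omega⟩
        · rcases lt_or_ge f.1 e.2 with hcb | hbc
          · have hje : j = 4 := isBdAnchor_unique hj (bdL24w1 hca hcb)
            subst hje
            refine hEF 1 (Or.inl rfl) ?_
            rw [show 5 * m * t + 5 * m - 2 + 1 = i + 1 by omega, anchorPos, hw2,
              bdj_eq (show IsBdAnchor (((pat e ++ pat f).drop 3).take 4) 3 from bdL24w2 hca hcb)]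
            omega
          · have hje : j = 3 := isBdAnchor_unique hj (bdL5w1 hba hbc hca)
            subst hje
            refine hEF 1 (Or.inl rfl) ?_
            rw [show 5 * m * t + 5 * m - 2 + 1 = i + 1 by omega, anchorPos, hw2,
              bdj_eq (show IsBdAnchor (((pat e ++ pat f).drop 3).take 4) 2 from bdL5w2 hba hbc hca)]
            omega
    · -- w2 / w3 windows: directly boundary-extra positions
      have hv : anchorPos (catS m A) i = i - 1 + j := by
        rw [anchorPos, bdj_eq hj]
      rcases hr with hr | hr
      · exact hEF 1 (Or.inl rfl) (by rw [← hv]; congr 1; omega)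
      · exact hEF 2 (Or.inr rfl) (by rw [← hv]; congr 1; omega)

end Upper

/-- Let `G = (Σ, A)` be a directed graph on letters without self-loops,
`m = 2|A|+1`, and let `S` be the concatenation over all edges `(a,b) ∈ A` (in a fixed
order, given here by a duplicate-free list of the edges) of `(aabab)^m`. Then for every
linear order on `Σ`, `|A_4(S)| = 2·|A|·m + d·m + ε` for some `ε ∈ [-|A|, |A|]`, where `d`
is the number of edges `(a,b) ∈ A` with `a < b`. -/
theorem bdAnchors_of_feedback_arc_string {β : Type*}
    (A : List (β × β)) (hnodup : A.Nodup) (hne : ∀ e ∈ A, e.1 ≠ e.2)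
    (m : ℕ) (hm : m = 2 * A.length + 1)
    (S : List β)
    (hS : S = (A.map (fun e => listPow [e.1, e.1, e.2, e.1, e.2] m)).flatten)
    (r : LinearOrder β) :
    ∃ ε : ℤ, -(A.length : ℤ) ≤ ε ∧ ε ≤ (A.length : ℤ) ∧
      ((@bdAnchors β r 4 S).ncard : ℤ) =
        2 * (A.length : ℤ) * (m : ℤ) +
          (Nat.card {e : β × β // e ∈ A ∧ r.lt e.1 e.2} : ℤ) * (m : ℤ) + ε := by
  letI : LinearOrder β := r
  have hSS : S = catS m A := by
    rw [hS]; rfl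
  -- identify d with a filter length
  have hd : (Nat.card {e : β × β // e ∈ A ∧ r.lt e.1 e.2} : ℕ) =
      (A.filter (fun e => e.1 < e.2)).length := by
    have h1 : ∀ e : β × β, (e ∈ A ∧ r.lt e.1 e.2) ↔ e ∈ A.filter (fun e => e.1 < e.2) := by
      intro e
      rw [List.mem_filter]
      constructor
      · rintro ⟨h1, h2⟩; exact ⟨h1, decide_eq_true h2⟩
      · rintro ⟨h1, h2⟩; exact ⟨h1, of_decide_eq_true h2⟩
    rw [Nat.card_congr (Equiv.subtypeEquivRight h1)]
    rw [Nat.card_congr (Equiv.subtypeEquivRight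
      (fun x => (List.mem_toFinset (l := A.filter (fun e => e.1 < e.2))).symm))]
    rw [Nat.card_eq_finsetCard]
    exact List.toFinset_card_of_nodup (hnodup.filter _)
  rcases eq_or_ne A [] with rfl | hAne
  · -- empty case
    have hempty : @bdAnchors β r 4 S = ∅ := by
      ext p
      simp only [Set.mem_empty_iff_false, iff_false]
      rintro ⟨i, hi, j, hj, rfl⟩
      have h9 := hj.1.1
      have hS0 : S = [] := by rw [hSS]; rfl
      rw [hS0] at h9
      simp only [frag, List.drop_nil, List.take_nil, List.length_nil] at h9
      rw [Finset.mem_Icc] at h9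
      omega
    refine ⟨0, by simp, by simp, ?_⟩
    rw [hempty]
    simp [hd]
  · have hk1 : 1 ≤ A.length := List.length_pos_iff.mpr hAne
    have hm3 : 3 ≤ m := by omega
    set I := interiorF (β := β) m A 0 with hI
    set E := EF m A with hE
    have hlow : ↑I ⊆ @bdAnchors β r 4 S := by
      rw [hSS]; exact interior_subset_bdAnchors m hm3 A hne
    have hup : @bdAnchors β r 4 S ⊆ ↑(I ∪ E) := by
      rw [hSS, Finset.coe_union]
      exact bdAnchors_subset m hm3 A hne
    have hfin : (@bdAnchors β r 4 S).Finite := Set.Finite.subset (I ∪ E).finite_toSet hup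
    have h1 : I.card ≤ (@bdAnchors β r 4 S).ncard := by
      rw [← Set.ncard_coe_finset]
      exact Set.ncard_le_ncard hlow hfin
    have h2 : (@bdAnchors β r 4 S).ncard ≤ I.card + E.card := by
      calc (@bdAnchors β r 4 S).ncard ≤ (↑(I ∪ E) : Set ℕ).ncard :=
            Set.ncard_le_ncard hup (I ∪ E).finite_toSet
        _ = (I ∪ E).card := Set.ncard_coe_finset _
        _ ≤ I.card + E.card := Finset.card_union_le _ _
    have hIcard : I.card + A.length =
        (2 * A.length + (A.filter fun e => e.1 < e.2).length) * m :=
      card_interiorF m (by omega) A 0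
    have hEcard : E.card ≤ 2 * (A.length - 1) := card_EF m A
    refine ⟨((@bdAnchors β r 4 S).ncard : ℤ) - 2 * (A.length : ℤ) * m -
      (Nat.card {e : β × β // e ∈ A ∧ r.lt e.1 e.2} : ℤ) * m, ?_, ?_, by ring⟩
    · -- lower bound for ε
      have hc : ((2 * A.length + (A.filter fun e => e.1 < e.2).length) * m : ℤ) =
          2 * (A.length : ℤ) * m +
            ((A.filter fun e => e.1 < e.2).length : ℤ) * m := by ring
      have h3 : ((I.card : ℤ)) + A.length =
          ((2 * A.length + (A.filter fun e => e.1 < e.2).length) * m : ℕ) := by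
        exact_mod_cast congrArg (Nat.cast (R := ℤ)) hIcard
      rw [hd]
      push_cast at h3 ⊢
      have h1' : (I.card : ℤ) ≤ ((@bdAnchors β r 4 S).ncard : ℤ) := by exact_mod_cast h1
      linarith
    · -- upper bound for ε
      rw [hd]
      have h2' : ((@bdAnchors β r 4 S).ncard : ℤ) ≤ (I.card : ℤ) + E.card := by
        exact_mod_cast h2
      have hE' : (E.card : ℤ) ≤ 2 * ((A.length : ℤ) - 1) := by
        have : (E.card : ℤ) ≤ ((2 * (A.length - 1) : ℕ) : ℤ) := by exact_mod_cast hEcard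
        have h4 : ((2 * (A.length - 1) : ℕ) : ℤ) = 2 * ((A.length : ℤ) - 1) := by
          omega
        omega
      have h3 : ((I.card : ℤ)) + A.length =
          ((2 * A.length + (A.filter fun e => e.1 < e.2).length) * m : ℕ) := by
        exact_mod_cast congrArg (Nat.cast (R := ℤ)) hIcard
      push_cast at h3 ⊢
      linarith
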